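/- arXiv:2601.19828 — 2 statements merged into one kernel-verified Lean document; each statement's English description precedes it below -/
import Mathlib

section
/- Let H be a real Hilbert space with inner product ⟨·,·⟩, let q ∈ ℕ, and let 0 = t_0 < t_1 < … < t_N = T be a partition of [0,T], with I_n = (t_{n−1}, t_n). Let v : [0,T] → H be continuously differentiable. For each n ∈ {1,…,N}, let p_n be an H-valued polynomial of degree at most q with p_n(t_n) = v(t_n) and ∫_{I_n} ⟨v(t) − p_n(t), w(t)⟩ dt = 0 for every H-valued polynomial w of degree at most q − 1. Then for every family w_1, …, w_N of H-valued polynomials of degree at most q, Σ_{n=1}^{N} ∫_{I_n} ⟨p_n'(t), w_n(t)⟩ dt + Σ_{n=1}^{N−1} ⟨p_{n+1}(t_n) − p_n(t_n), w_{n+1}(t_n)⟩ + ⟨p_1(0), w_1(0)⟩ = Σ_{n=1}^{N} ∫_{I_n} ⟨v'(t), w_n(t)⟩ dt + ⟨v(0), w_1(0)⟩. -/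
/-!
On each interval `I_n = (a, b)`, integrate `⟪(v - p_n)', w_n⟫` by parts: the integral of
`⟪v - p_n, w_n'⟫` vanishes because `w_n'` has degree `≤ q - 1`, and the boundary term at `b`
vanishes by interpolation. Hence `∫ ⟪p_n', w_n⟫ = ∫ ⟪v', w_n⟫ + ⟪v(a) - p_n(a), w_n(a)⟫`.
Since `v(t_n) = p_n(t_n)`, the boundary term at `t_n` of the interval `I_{n+1}` is exactly minus
the jump term, so after summing only `⟪v(0) - p_1(0), w_1(0)⟫` survives.
-/

open MeasureTheory Set RealInnerProductSpace

/-- An `H`-valued polynomial of degree at most `q`: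
`t ↦ ∑_{i=0}^{q} t^i • c i` with coefficients `c i ∈ H`. -/
def IsPolyDegLE (H : Type*) [AddCommGroup H] [Module ℝ H] (q : ℕ) (f : ℝ → H) : Prop :=
  ∃ c : Fin (q + 1) → H, ∀ t : ℝ, f t = ∑ i : Fin (q + 1), t ^ (i : ℕ) • c i

/-- An `H`-valued polynomial of degree at most `q - 1` (i.e. with `q` coefficients). -/
def IsPolyDegLT (H : Type*) [AddCommGroup H] [Module ℝ H] (q : ℕ) (f : ℝ → H) : Prop :=
  ∃ c : Fin q → H, ∀ t : ℝ, f t = ∑ i : Fin q, t ^ (i : ℕ) • c i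

section Polynomial

variable {H : Type*} [NormedAddCommGroup H] [NormedSpace ℝ H] {q : ℕ} {f : ℝ → H}

theorem IsPolyDegLT.continuous (hf : IsPolyDegLT H q f) : Continuous f := by
  obtain ⟨c, hc⟩ := hf
  rw [funext hc]
  fun_prop

theorem IsPolyDegLE.continuous (hf : IsPolyDegLE H q f) : Continuous f :=
  IsPolyDegLT.continuous hf

theorem IsPolyDegLE.exists_hasDerivAt (hf : IsPolyDegLE H q f) :
    ∃ f' : ℝ → H, IsPolyDegLT H q f' ∧ ∀ x, HasDerivAt f (f' x) x := by
  obtain ⟨c, hc⟩ := hf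
  refine ⟨fun x => ∑ j : Fin q, x ^ (j : ℕ) • ((((j : ℕ) : ℝ) + 1) • c j.succ),
    ⟨_, fun _ => rfl⟩, fun x => ?_⟩
  have h : HasDerivAt f (∑ i : Fin (q + 1), (((i : ℕ) : ℝ) * x ^ ((i : ℕ) - 1)) • c i) x := by
    rw [funext hc]
    refine HasDerivAt.fun_sum fun i _ => ?_
    simpa using (hasDerivAt_pow (i : ℕ) x).smul_const (c i)
  convert h using 1
  rw [Fin.sum_univ_succ]
  simp [Fin.val_succ, smul_smul, mul_comm]

end Polynomial

theorem Finset.sum_Icc_succ_eq_add_sum_Icc {M : Type*} [AddCommMonoid M] {a b : ℕ}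
    (hab : a ≤ b + 1) (f : ℕ → M) : ∑ n ∈ Icc a (b + 1), f n = f a + ∑ n ∈ Icc a b, f (n + 1) := by
  rw [← Finset.insert_Icc_add_one_left_eq_Icc hab, Finset.sum_insert (by simp),
    ← Finset.map_add_right_Icc, Finset.sum_map]
  rfl

section InnerProduct

variable {H : Type*} [NormedAddCommGroup H] [InnerProductSpace ℝ H] {a b : ℝ}

theorem intervalIntegral.integral_inner_deriv_eq_deriv_inner {u u' w w' : ℝ → H} (hab : a ≤ b)
    (hu : ContinuousOn u (Icc a b)) (hu' : ContinuousOn u' (Icc a b))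
    (hw : ContinuousOn w (Icc a b)) (hw' : ContinuousOn w' (Icc a b))
    (huu' : ∀ x ∈ Ioo a b, HasDerivAt u (u' x) x) (hww' : ∀ x ∈ Ioo a b, HasDerivAt w (w' x) x) :
    ∫ x in a..b, ⟪u x, w' x⟫ = ⟪u b, w b⟫ - ⟪u a, w a⟫ - ∫ x in a..b, ⟪u' x, w x⟫ := by
  have hint : ∀ {f g : ℝ → H}, ContinuousOn f (Icc a b) → ContinuousOn g (Icc a b) →
      IntervalIntegrable (fun x => ⟪f x, g x⟫) volume a b := fun hf hg =>
    (hf.inner hg).intervalIntegrable_of_Icc hab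
  have hftc := intervalIntegral.integral_eq_sub_of_hasDerivAt_of_le hab (hu.inner hw)
    (fun x hx => (huu' x hx).inner ℝ (hww' x hx)) ((hint hu hw').add (hint hu' hw))
  rw [intervalIntegral.integral_add (hint hu hw') (hint hu' hw)] at hftc
  linarith

def IsThomeeProjection (q : ℕ) (a b : ℝ) (v p : ℝ → H) : Prop :=
  IsPolyDegLE H q p ∧ p b = v b ∧
    ∀ w : ℝ → H, IsPolyDegLT H q w → ∫ s in a..b, ⟪v s - p s, w s⟫ = 0

theorem IsThomeeProjection.integral_inner_deriv_eq {q : ℕ} {v v' p w : ℝ → H}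
    (hp : IsThomeeProjection q a b v p) (hab : a ≤ b) (hv : ContinuousOn v (Icc a b))
    (hv' : ContinuousOn v' (Icc a b)) (hvv' : ∀ x ∈ Ioo a b, HasDerivAt v (v' x) x)
    (hw : IsPolyDegLE H q w) :
    ∫ s in a..b, ⟪deriv p s, w s⟫ = (∫ s in a..b, ⟪v' s, w s⟫) + ⟪v a - p a, w a⟫ := by
  obtain ⟨hpoly, hpb, horth⟩ := hp
  obtain ⟨p', hp'poly, hpp'⟩ := hpoly.exists_hasDerivAt
  obtain ⟨w', hw'poly, hww'⟩ := hw.exists_hasDerivAt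
  have hwc : ContinuousOn w (Icc a b) := hw.continuous.continuousOn
  have hp'w : IntervalIntegrable (fun s => ⟪p' s, w s⟫) volume a b :=
    (hp'poly.continuous.continuousOn.inner hwc).intervalIntegrable_of_Icc hab
  have hv'w : IntervalIntegrable (fun s => ⟪v' s, w s⟫) volume a b :=
    (hv'.inner hwc).intervalIntegrable_of_Icc hab
  have hparts := intervalIntegral.integral_inner_deriv_eq_deriv_inner (u := fun x => v x - p x)
    (u' := fun x => v' x - p' x) hab
    (hv.sub hpoly.continuous.continuousOn) (hv'.sub hp'poly.continuous.continuousOn) hwc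
    hw'poly.continuous.continuousOn (fun x hx => (hvv' x hx).sub (hpp' x)) (fun x _ => hww' x)
  rw [horth w' hw'poly, hpb, sub_self, inner_zero_left] at hparts
  simp only [inner_sub_left, intervalIntegral.integral_sub hv'w hp'w] at hparts ⊢
  rw [funext fun x => (hpp' x).deriv]
  linarith

theorem IsThomeeProjection.integral_inner_deriv_eq_derivWithin {q : ℕ} {c d : ℝ} {v p w : ℝ → H}
    (hp : IsThomeeProjection q a b v p) (hcd : c < d) (hv : ContDiffOn ℝ 1 v (Icc c d))
    (hca : c ≤ a) (hab : a ≤ b) (hbd : b ≤ d) (hw : IsPolyDegLE H q w) :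
    ∫ s in a..b, ⟪deriv p s, w s⟫
      = (∫ s in a..b, ⟪derivWithin v (Icc c d) s, w s⟫) + ⟪v a - p a, w a⟫ := by
  have hsub : Icc a b ⊆ Icc c d := Icc_subset_Icc hca hbd
  refine hp.integral_inner_deriv_eq hab (hv.continuousOn.mono hsub)
    ((hv.continuousOn_derivWithin (uniqueDiffOn_Icc hcd) le_rfl).mono hsub) (fun x hx => ?_) hw
  have hx' : x ∈ Ioo c d := Ioo_subset_Ioo hca hbd hx
  exact ((hv.differentiableOn one_ne_zero) x (Ioo_subset_Icc_self hx')).hasDerivWithinAt.hasDerivAt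
    (Icc_mem_nhds hx'.1 hx'.2)

theorem sum_inner_sub_left_eq_sub_sum_inner_jump (t : ℕ → ℝ) (v : ℝ → H) (p w : ℕ → ℝ → H)
    (M : ℕ) (hinterp : ∀ n ∈ Finset.Icc 1 M, p n (t n) = v (t n)) :
    ∑ n ∈ Finset.Icc 1 (M + 1), ⟪v (t (n - 1)) - p n (t (n - 1)), w n (t (n - 1))⟫
      = ⟪v (t 0) - p 1 (t 0), w 1 (t 0)⟫
        - ∑ n ∈ Finset.Icc 1 M, ⟪p (n + 1) (t n) - p n (t n), w (n + 1) (t n)⟫ := by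
  have hjump : ∀ n ∈ Finset.Icc 1 M, ⟪v (t n) - p (n + 1) (t n), w (n + 1) (t n)⟫
      = -⟪p (n + 1) (t n) - p n (t n), w (n + 1) (t n)⟫ := fun n hn => by
    rw [← hinterp n hn, ← inner_neg_left, neg_sub]
  rw [Finset.sum_Icc_succ_eq_add_sum_Icc (by omega)]
  simp only [Nat.add_sub_cancel, Nat.sub_self]
  rw [Finset.sum_congr rfl hjump, Finset.sum_neg_distrib]
  ring

end InnerProduct

theorem thomee_dg_orthogonality_general (H : Type*) [NormedAddCommGroup H] [InnerProductSpace ℝ H]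
    (q N : ℕ) (hN : 1 ≤ N) (T : ℝ)
    (t : ℕ → ℝ) (ht0 : t 0 = 0) (htN : t N = T) (hmono : ∀ n < N, t n < t (n + 1))
    (v : ℝ → H) (hv : ContDiffOn ℝ 1 v (Icc (0 : ℝ) T))
    (p : ℕ → ℝ → H)
    (hppoly : ∀ n ∈ Finset.Icc 1 N, IsPolyDegLE H q (p n))
    (hinterp : ∀ n ∈ Finset.Icc 1 N, p n (t n) = v (t n))
    (horth : ∀ n ∈ Finset.Icc 1 N, ∀ w : ℝ → H, IsPolyDegLT H q w →
      (∫ s in t (n - 1)..t n, ⟪v s - p n s, w s⟫) = 0)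
    (w : ℕ → ℝ → H) (hw : ∀ n ∈ Finset.Icc 1 N, IsPolyDegLE H q (w n)) :
    (∑ n ∈ Finset.Icc 1 N, ∫ s in t (n - 1)..t n, ⟪deriv (p n) s, w n s⟫)
      + (∑ n ∈ Finset.Icc 1 (N - 1), ⟪p (n + 1) (t n) - p n (t n), w (n + 1) (t n)⟫)
      + ⟪p 1 0, w 1 0⟫
    = (∑ n ∈ Finset.Icc 1 N, ∫ s in t (n - 1)..t n, ⟪derivWithin v (Icc (0 : ℝ) T) s, w n s⟫)
      + ⟪v 0, w 1 0⟫ := by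
  obtain ⟨M, rfl⟩ := Nat.exists_eq_add_of_le' hN
  have ht : StrictMonoOn t (Iic (M + 1)) := strictMonoOn_Iic_of_lt_succ hmono
  have hT : 0 < T := ht0 ▸ htN ▸ ht (by simp) (by simp) (by omega)
  have hlocal : ∀ n ∈ Finset.Icc 1 (M + 1),
      ∫ s in t (n - 1)..t n, ⟪deriv (p n) s, w n s⟫
        = (∫ s in t (n - 1)..t n, ⟪derivWithin v (Icc 0 T) s, w n s⟫)
          + ⟪v (t (n - 1)) - p n (t (n - 1)), w n (t (n - 1))⟫ := by
    intro n hn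
    obtain ⟨hn1, hnN⟩ := Finset.mem_Icc.mp hn
    exact IsThomeeProjection.integral_inner_deriv_eq_derivWithin
      ⟨hppoly n hn, hinterp n hn, horth n hn⟩ hT hv
      (ht0 ▸ ht.monotoneOn (by simp) (by simp; omega) (Nat.zero_le _))
      (ht.monotoneOn (by simp; omega) (by simpa) (by omega))
      (htN ▸ ht.monotoneOn (by simpa) (by simp) hnN) (hw n hn)
  rw [Nat.add_sub_cancel, Finset.sum_congr rfl hlocal, Finset.sum_add_distrib,
    sum_inner_sub_left_eq_sub_sum_inner_jump t v p w M
      (fun n hn => hinterp n (by simp at hn ⊢; omega)), ht0, inner_sub_left]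
  ring

/-- **Orthogonality of the intervalwise Thomée projection for the DG time derivative.**
Let `0 = t_0 < … < t_N = T`, let `v` be `C¹` on `[0,T]` and let `p_n` be the Thomée
projection of `v` on `(t_{n−1}, t_n)` (right-endpoint interpolation, `L²`-orthogonality of
`v − p_n` to degree `≤ q − 1`). Then for all polynomial test functions `w_n` of degree `≤ q`,
`∑_n ∫_{I_n} ⟨p_n', w_n⟩ + ∑_{n=1}^{N−1} ⟨p_{n+1}(t_n) − p_n(t_n), w_{n+1}(t_n)⟩ + ⟨p_1(0), w_1(0)⟩
  = ∑_n ∫_{I_n} ⟨v', w_n⟩ + ⟨v(0), w_1(0)⟩`. -/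
theorem thomee_dg_orthogonality (H : Type*) [NormedAddCommGroup H] [InnerProductSpace ℝ H]
    [CompleteSpace H] (q N : ℕ) (hN : 1 ≤ N) (T : ℝ)
    (t : ℕ → ℝ) (ht0 : t 0 = 0) (htN : t N = T) (hmono : ∀ n < N, t n < t (n + 1))
    (v : ℝ → H) (hv : ContDiffOn ℝ 1 v (Icc (0 : ℝ) T))
    (p : ℕ → ℝ → H)
    (hppoly : ∀ n ∈ Finset.Icc 1 N, IsPolyDegLE H q (p n))
    (hinterp : ∀ n ∈ Finset.Icc 1 N, p n (t n) = v (t n))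
    (horth : ∀ n ∈ Finset.Icc 1 N, ∀ w : ℝ → H, IsPolyDegLT H q w →
      (∫ s in t (n - 1)..t n, ⟪v s - p n s, w s⟫) = 0)
    (w : ℕ → ℝ → H) (hw : ∀ n ∈ Finset.Icc 1 N, IsPolyDegLE H q (w n)) :
    (∑ n ∈ Finset.Icc 1 N, ∫ s in t (n - 1)..t n, ⟪deriv (p n) s, w n s⟫)
      + (∑ n ∈ Finset.Icc 1 (N - 1), ⟪p (n + 1) (t n) - p n (t n), w (n + 1) (t n)⟫)
      + ⟪p 1 0, w 1 0⟫
    = (∑ n ∈ Finset.Icc 1 N, ∫ s in t (n - 1)..t n, ⟪derivWithin v (Icc (0 : ℝ) T) s, w n s⟫)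
      + ⟪v 0, w 1 0⟫ :=
  thomee_dg_orthogonality_general H q N hN T t ht0 htN hmono v hv p hppoly hinterp horth w hw
end

section
/- Let H be a real Hilbert space with inner product ⟨·,·⟩, let q ≥ 1 be an integer, and let 0 = t_0 < t_1 < … < t_N = T be a partition of [0,T]. Let v : [0,T] → H be continuously differentiable, and let p : [0,T] → H be a continuous function whose restriction to each [t_{n−1}, t_n] agrees with an H-valued polynomial of degree at most q, such that p(0) = v(0) and, for every n ∈ {1,…,N}, ∫_{t_{n−1}}^{t_n} ⟨v'(t) − p'(t), w(t)⟩ dt = 0 for every H-valued polynomial w of degree at most q − 1. Then p(t_n) = v(t_n) for every n ∈ {0, 1, …, N}. -/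
/-! Only constant test functions `w = e` are needed: they force `v - P n` to take the same value
at both ends of the `n`-th interval, and since `p` agrees with `P n` at both of those nodes,
`p = v` propagates from `t 0` to every node. -/

open MeasureTheory Set RealInnerProductSpace

theorem IsPolyDegLT.const {H : Type*} [AddCommGroup H] [Module ℝ H] {q : ℕ} (hq : 1 ≤ q)
    (e : H) : IsPolyDegLT H q fun _ => e :=
  ⟨Pi.single ⟨0, hq⟩ e, fun s => by
    rw [Finset.sum_eq_single ⟨0, hq⟩ (fun i _ hi => by simp [hi]) (by simp)]
    simp⟩

theorem IsPolyDegLE.contDiff {H : Type*} [NormedAddCommGroup H] [NormedSpace ℝ H] {q : ℕ}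
    {f : ℝ → H} (hf : IsPolyDegLE H q f) : ContDiff ℝ 1 f := by
  obtain ⟨c, hc⟩ := hf
  rw [funext hc]
  fun_prop

section

variable {H : Type*} [NormedAddCommGroup H] [InnerProductSpace ℝ H]

/-- Testing against `e = h b - h a` turns the orthogonality into `‖h b - h a‖² = 0`. -/
theorem eq_of_forall_integral_inner_deriv_eq_zero {h h' : ℝ → H} {a b : ℝ} (hab : a ≤ b)
    (hcont : ContinuousOn h (Icc a b)) (hderiv : ∀ x ∈ Ioo a b, HasDerivAt h (h' x) x)
    (hcont' : ContinuousOn h' (Icc a b)) (horth : ∀ e : H, ∫ x in a..b, ⟪h' x, e⟫ = 0) :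
    h b = h a := by
  set e := h b - h a
  have hftc : ∫ x in a..b, ⟪h' x, e⟫ = ⟪h b, e⟫ - ⟪h a, e⟫ :=
    intervalIntegral.integral_eq_sub_of_hasDerivAt_of_le hab
      (hcont.inner continuousOn_const)
      (fun x hx => (hderiv x hx).inner ℝ (hasDerivAt_const x e) |>.congr_deriv (by simp))
      ((hcont'.inner continuousOn_const).intervalIntegrable_of_Icc hab)
  rw [horth, ← inner_sub_left, real_inner_self_eq_norm_sq] at hftc
  exact sub_eq_zero.mp (by simpa using hftc.symm)

theorem sub_eq_sub_of_integral_inner_derivWithin_sub_deriv_eq_zero {v f : ℝ → H}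
    {s : Set ℝ} {a b : ℝ} (hs : UniqueDiffOn ℝ s) (hv : ContDiffOn ℝ 1 v s)
    (hf : ContDiff ℝ 1 f) (hab : a ≤ b) (hsub : Icc a b ⊆ s)
    (horth : ∀ e : H, ∫ x in a..b, ⟪derivWithin v s x - deriv f x, e⟫ = 0) :
    v b - f b = v a - f a := by
  refine eq_of_forall_integral_inner_deriv_eq_zero hab
    ((hv.continuousOn.mono hsub).sub hf.continuous.continuousOn) (fun x hx => ?_)
    (((hv.continuousOn_derivWithin hs le_rfl).mono hsub).sub
      (hf.continuous_deriv le_rfl).continuousOn) horth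
  have hs_nhds : s ∈ nhds x :=
    Filter.mem_of_superset (isOpen_Ioo.mem_nhds hx) (Ioo_subset_Icc_self.trans hsub)
  exact ((hv.differentiableOn one_ne_zero x (mem_of_mem_nhds hs_nhds)).hasDerivWithinAt.hasDerivAt
    hs_nhds).sub (hf.differentiable one_ne_zero x).hasDerivAt

end

theorem aziz_monk_nodal_exactness_general (H : Type*) [NormedAddCommGroup H] [InnerProductSpace ℝ H]
    (q N : ℕ) (hq : 1 ≤ q) (T : ℝ)
    (t : ℕ → ℝ) (ht0 : t 0 = 0) (htN : t N = T) (hmono : ∀ n < N, t n < t (n + 1))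
    (v : ℝ → H) (hv : ContDiffOn ℝ 1 v (Icc (0 : ℝ) T))
    (p : ℝ → H)
    (P : ℕ → ℝ → H)
    (hPpoly : ∀ n ∈ Finset.Icc 1 N, IsPolyDegLE H q (P n))
    (hagree : ∀ n ∈ Finset.Icc 1 N, ∀ s ∈ Icc (t (n - 1)) (t n), p s = P n s)
    (hp0 : p 0 = v 0)
    (horth : ∀ n ∈ Finset.Icc 1 N, ∀ w : ℝ → H, IsPolyDegLT H q w →
      (∫ s in t (n - 1)..t n, ⟪derivWithin v (Icc (0 : ℝ) T) s - deriv (P n) s, w s⟫) = 0) :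
    ∀ n ≤ N, p (t n) = v (t n) := by
  have ht_mono : StrictMonoOn t (Iic N) := strictMonoOn_Iic_of_lt_succ hmono
  have ht_mem : ∀ n ≤ N, t n ∈ Icc 0 T := fun n hn => by
    rw [← ht0, ← htN]
    exact ⟨ht_mono.monotoneOn (Nat.zero_le N) hn (Nat.zero_le n),
      ht_mono.monotoneOn hn (mem_Iic.mpr le_rfl) hn⟩
  intro n hn
  induction n with
  | zero => rwa [ht0]
  | succ m ih =>
    have hm : m + 1 ∈ Finset.Icc 1 N := Finset.mem_Icc.mpr ⟨by omega, hn⟩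
    have hlt : t m < t (m + 1) := hmono m hn
    have hsub : Icc (t m) (t (m + 1)) ⊆ Icc 0 T :=
      Icc_subset_Icc (ht_mem m (by omega)).1 (ht_mem (m + 1) hn).2
    have hjump := sub_eq_sub_of_integral_inner_derivWithin_sub_deriv_eq_zero
      (uniqueDiffOn_Icc ((ht_mem m (by omega)).1.trans_lt (hlt.trans_le (ht_mem (m + 1) hn).2)))
      hv (hPpoly _ hm).contDiff hlt.le hsub
      (fun e => horth _ hm _ (IsPolyDegLT.const hq e))
    have hleft : p (t m) = P (m + 1) (t m) := hagree _ hm _ (left_mem_Icc.mpr hlt.le)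
    have hright : p (t (m + 1)) = P (m + 1) (t (m + 1)) :=
      hagree _ hm _ (right_mem_Icc.mpr hlt.le)
    rw [← hleft, ih (by omega), sub_self, sub_eq_zero] at hjump
    rw [hright, hjump]

/-- **Nodal exactness of the Aziz–Monk projection.** Let `0 = t_0 < … < t_N = T`, let `v` be
`C¹` on `[0,T]`, and let `p` be a continuous function on `[0,T]` agreeing on each
`[t_{n−1}, t_n]` with a polynomial `P n` of degree at most `q`, such that `p(0) = v(0)` and,
on each interval, `v' − p'` is `L²`-orthogonal to polynomials of degree at most `q − 1`.
Then `p(t_n) = v(t_n)` for every node `t_n`. -/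
theorem aziz_monk_nodal_exactness (H : Type*) [NormedAddCommGroup H] [InnerProductSpace ℝ H]
    [CompleteSpace H] (q N : ℕ) (hq : 1 ≤ q) (hN : 1 ≤ N) (T : ℝ)
    (t : ℕ → ℝ) (ht0 : t 0 = 0) (htN : t N = T) (hmono : ∀ n < N, t n < t (n + 1))
    (v : ℝ → H) (hv : ContDiffOn ℝ 1 v (Icc (0 : ℝ) T))
    (p : ℝ → H) (hpc : ContinuousOn p (Icc (0 : ℝ) T))
    (P : ℕ → ℝ → H)
    (hPpoly : ∀ n ∈ Finset.Icc 1 N, IsPolyDegLE H q (P n))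
    (hagree : ∀ n ∈ Finset.Icc 1 N, ∀ s ∈ Icc (t (n - 1)) (t n), p s = P n s)
    (hp0 : p 0 = v 0)
    (horth : ∀ n ∈ Finset.Icc 1 N, ∀ w : ℝ → H, IsPolyDegLT H q w →
      (∫ s in t (n - 1)..t n, ⟪derivWithin v (Icc (0 : ℝ) T) s - deriv (P n) s, w s⟫) = 0) :
    ∀ n ≤ N, p (t n) = v (t n) :=
  aziz_monk_nodal_exactness_general H q N hq T t ht0 htN hmono v hv p P hPpoly hagree hp0 horth
end
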